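/- Let Σ_B and Σ_W be real symmetric positive semidefinite p×p matrices, let V ⊆ ℝ^p be the column space of Σ_B, and let U ∈ ℝ^{p×p} be an invertible matrix that maps V into V and maps the orthogonal complement V^⊥ into V^⊥. Then Tr[(U Σ_B U^T)† (U Σ_W U^T)] = Tr[Σ_B† Σ_W]. -/

import Mathlib

/-!
The Penrose conditions survive the congruence `A ↦ L A R`, `A† ↦ R⁻¹ A† L⁻¹` whenever `L`
commutes with `A A†` and `R` with `A† A`. For symmetric `Σ_B` both products are the orthogonal
projection onto `V`, which commutes with `U` exactly because `U` preserves `V` and `V^⊥`.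
Uniqueness of the pseudoinverse then gives `(U Σ_B Uᵀ)† = U⁻ᵀ Σ_B† U⁻¹`, and the trace is
invariant under the resulting similarity by `U⁻ᵀ`.
-/

open Matrix

noncomputable section

/-- `Ad` is the Moore–Penrose pseudoinverse of `A`: the four Penrose conditions. -/
def IsMoorePenrose {p : ℕ} (A Ad : Matrix (Fin p) (Fin p) ℝ) : Prop :=
  A * Ad * A = A ∧ Ad * A * Ad = Ad ∧ (A * Ad)ᵀ = A * Ad ∧ (Ad * A)ᵀ = Ad * A

theorem Commute.transpose {n α : Type*} [Fintype n] [CommSemiring α] {A B : Matrix n n α}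
    (h : Commute A B) : Commute Aᵀ Bᵀ := by
  rw [Commute, SemiconjBy, ← transpose_mul, ← transpose_mul, h.eq]

namespace IsMoorePenrose

variable {p : ℕ} {A B : Matrix (Fin p) (Fin p) ℝ}

theorem transpose (h : IsMoorePenrose A B) : IsMoorePenrose Aᵀ Bᵀ := by
  obtain ⟨h1, h2, h3, h4⟩ := h
  refine ⟨?_, ?_, ?_, ?_⟩
  · rw [← transpose_mul, ← transpose_mul, ← Matrix.mul_assoc, h1]
  · rw [← transpose_mul, ← transpose_mul, ← Matrix.mul_assoc, h2]
  · rw [← transpose_mul, h4, h4]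
  · rw [← transpose_mul, h3, h3]

theorem conj (h : IsMoorePenrose A B) {L R : Matrix (Fin p) (Fin p) ℝ}
    (hL : IsUnit L.det) (hR : IsUnit R.det) (hLAB : Commute L (A * B))
    (hRBA : Commute R (B * A)) : IsMoorePenrose (L * A * R) (R⁻¹ * B * L⁻¹) := by
  obtain ⟨h1, h2, h3, h4⟩ := h
  have hAB : L * A * R * (R⁻¹ * B * L⁻¹) = A * B := by
    calc L * A * R * (R⁻¹ * B * L⁻¹) = L * (A * B) * L⁻¹ := by
          simp only [Matrix.mul_assoc, mul_nonsing_inv_cancel_left _ _ hR]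
      _ = A * B := by rw [hLAB.eq, mul_nonsing_inv_cancel_right _ _ hL]
  have hBA : R⁻¹ * B * L⁻¹ * (L * A * R) = B * A := by
    calc R⁻¹ * B * L⁻¹ * (L * A * R) = R⁻¹ * (B * A * R) := by
          simp only [Matrix.mul_assoc, nonsing_inv_mul_cancel_left _ _ hL]
      _ = B * A := by rw [← hRBA.eq, nonsing_inv_mul_cancel_left _ _ hR]
  refine ⟨?_, ?_, by rw [hAB, h3], by rw [hBA, h4]⟩
  · calc L * A * R * (R⁻¹ * B * L⁻¹) * (L * A * R) = L * (A * B * A) * R := by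
          simp only [Matrix.mul_assoc, mul_nonsing_inv_cancel_left _ _ hR,
            nonsing_inv_mul_cancel_left _ _ hL]
      _ = L * A * R := by rw [h1]
  · calc R⁻¹ * B * L⁻¹ * (L * A * R) * (R⁻¹ * B * L⁻¹) = R⁻¹ * (B * A * B) * L⁻¹ := by
          simp only [Matrix.mul_assoc, mul_nonsing_inv_cancel_left _ _ hR,
            nonsing_inv_mul_cancel_left _ _ hL]
      _ = R⁻¹ * B * L⁻¹ := by rw [h2]

theorem commute_mul_of_preserves (h : IsMoorePenrose A B) {U : Matrix (Fin p) (Fin p) ℝ}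
    (hUV : ∀ v ∈ LinearMap.range A.mulVecLin, U *ᵥ v ∈ LinearMap.range A.mulVecLin)
    (hUVperp : ∀ w : Fin p → ℝ, (∀ v ∈ LinearMap.range A.mulVecLin, v ⬝ᵥ w = 0) →
      ∀ v ∈ LinearMap.range A.mulVecLin, v ⬝ᵥ U *ᵥ w = 0) :
    Commute U (A * B) := by
  -- `A * B` is the orthogonal projection onto `V`.
  obtain ⟨h1, -, h3, -⟩ := h
  set V := LinearMap.range A.mulVecLin
  set P := A * B
  have mem : ∀ x, P *ᵥ x ∈ V := fun x => ⟨B *ᵥ x, by simp [P, mulVec_mulVec]⟩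
  have fix : ∀ v ∈ V, P *ᵥ v = v := by
    rintro _ ⟨y, rfl⟩
    simp only [P, mulVecLin_apply, mulVec_mulVec, h1]
  have self_adjoint : ∀ v w, v ⬝ᵥ P *ᵥ w = P *ᵥ v ⬝ᵥ w := by
    intro v w
    rw [dotProduct_mulVec, ← vecMul_transpose, h3]
  have perp_sub : ∀ x, ∀ v ∈ V, v ⬝ᵥ (x - P *ᵥ x) = 0 := by
    intro x v hv
    rw [dotProduct_sub, self_adjoint, fix v hv, sub_self]
  have kernel : ∀ z, (∀ v ∈ V, v ⬝ᵥ z = 0) → P *ᵥ z = 0 := by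
    intro z hz
    refine dotProduct_self_eq_zero.1 ?_
    rw [self_adjoint, fix _ (mem z), hz _ (mem z)]
  refine ext_iff_mulVec.2 fun x => ?_
  rw [← mulVec_mulVec x U P, ← mulVec_mulVec x P U]
  calc U *ᵥ P *ᵥ x = P *ᵥ U *ᵥ P *ᵥ x := (fix _ (hUV _ (mem x))).symm
    _ = P *ᵥ U *ᵥ P *ᵥ x + P *ᵥ U *ᵥ (x - P *ᵥ x) := by
      rw [kernel _ (hUVperp _ (perp_sub x)), add_zero]
    _ = P *ᵥ U *ᵥ x := by rw [← mulVec_add, ← mulVec_add, add_sub_cancel]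

theorem mul_eq_mul {C : Matrix (Fin p) (Fin p) ℝ} (hB : IsMoorePenrose A B)
    (hC : IsMoorePenrose A C) : A * B = A * C :=
  calc A * B = A * C * (A * B) := by rw [← Matrix.mul_assoc, hC.1]
    _ = (A * C)ᵀ * (A * B)ᵀ := by rw [hC.2.2.1, hB.2.2.1]
    _ = Cᵀ * (A * B * A)ᵀ := by simp only [transpose_mul, Matrix.mul_assoc]
    _ = A * C := by rw [hB.1, ← transpose_mul, hC.2.2.1]

theorem unique {C : Matrix (Fin p) (Fin p) ℝ} (hB : IsMoorePenrose A B)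
    (hC : IsMoorePenrose A C) : B = C := by
  have hAB : A * B = A * C := hB.mul_eq_mul hC
  have hBA : B * A = C * A := by
    have h := hB.transpose.mul_eq_mul hC.transpose
    rw [← transpose_mul, ← transpose_mul] at h
    exact transpose_injective h
  calc B = B * A * B := hB.2.1.symm
    _ = C * A * C := by rw [Matrix.mul_assoc, hAB, ← Matrix.mul_assoc, hBA]
    _ = C := hC.2.1

end IsMoorePenrose

theorem fuzziness_invariant_of_preserving_general {p : ℕ}
    (SB SW : Matrix (Fin p) (Fin p) ℝ) (hSB : SB.PosSemidef)
    (U : Matrix (Fin p) (Fin p) ℝ) (hU : IsUnit U.det)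
    (hUV : ∀ v ∈ LinearMap.range SB.mulVecLin, U.mulVec v ∈ LinearMap.range SB.mulVecLin)
    (hUVperp : ∀ w : Fin p → ℝ, (∀ v ∈ LinearMap.range SB.mulVecLin, v ⬝ᵥ w = 0) →
      ∀ v ∈ LinearMap.range SB.mulVecLin, v ⬝ᵥ U.mulVec w = 0)
    (SBd M : Matrix (Fin p) (Fin p) ℝ)
    (hSBd : IsMoorePenrose SB SBd) (hM : IsMoorePenrose (U * SB * Uᵀ) M) :
    (M * (U * SW * Uᵀ)).trace = (SBd * SW).trace := by
  have hSBt : SBᵀ = SB := isHermitian_iff_isSymm.1 hSB.isHermitian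
  have hP : Commute U (SB * SBd) := hSBd.commute_mul_of_preserves hUV hUVperp
  -- `SBd * SB = (SBᵀ * SBdᵀ)ᵀ` is the projection for the pseudoinverse pair `(SBᵀ, SBdᵀ)`.
  have hQ : Commute Uᵀ (SBd * SB) := by
    have h := (hSBd.transpose.commute_mul_of_preserves (U := U) (by rwa [hSBt])
      (by rwa [hSBt])).transpose
    rwa [← transpose_mul, transpose_transpose] at h
  have hUt : IsUnit Uᵀ.det := by rwa [det_transpose]
  rw [hM.unique (hSBd.conj hU hUt hP hQ)]
  calc (Uᵀ⁻¹ * SBd * U⁻¹ * (U * SW * Uᵀ)).trace = (Uᵀ⁻¹ * (SBd * SW) * Uᵀ).trace := by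
        simp only [Matrix.mul_assoc, nonsing_inv_mul_cancel_left _ _ hU]
    _ = (SBd * SW).trace := by rw [trace_mul_cycle, mul_nonsing_inv _ hUt, Matrix.one_mul]

/-- **Observation (partial invariance of Fuzziness).** Let `Σ_B`, `Σ_W` be symmetric PSD,
let `V` be the column space of `Σ_B`, and let `U` be invertible sending `V` into `V` and
`V^⊥` into `V^⊥`. Then `Tr[(U Σ_B Uᵀ)† (U Σ_W Uᵀ)] = Tr[Σ_B† Σ_W]`. -/
theorem fuzziness_invariant_of_preserving {p : ℕ}
    (SB SW : Matrix (Fin p) (Fin p) ℝ) (hSB : SB.PosSemidef) (hSW : SW.PosSemidef)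
    (U : Matrix (Fin p) (Fin p) ℝ) (hU : IsUnit U.det)
    (hUV : ∀ v ∈ LinearMap.range SB.mulVecLin, U.mulVec v ∈ LinearMap.range SB.mulVecLin)
    (hUVperp : ∀ w : Fin p → ℝ, (∀ v ∈ LinearMap.range SB.mulVecLin, v ⬝ᵥ w = 0) →
      ∀ v ∈ LinearMap.range SB.mulVecLin, v ⬝ᵥ U.mulVec w = 0)
    (SBd M : Matrix (Fin p) (Fin p) ℝ)
    (hSBd : IsMoorePenrose SB SBd) (hM : IsMoorePenrose (U * SB * Uᵀ) M) :
    (M * (U * SW * Uᵀ)).trace = (SBd * SW).trace :=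
  fuzziness_invariant_of_preserving_general SB SW hSB U hU hUV hUVperp SBd M hSBd hM
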